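/- arXiv:physics/0004057 — 8 statements merged into one kernel-verified Lean document; each statement's English description precedes it below -/
import Mathlib

section
/- (Blahut–Arimoto step: minimization over the conditional.) Let p be a strictly positive probability distribution on X, let q be a strictly positive probability distribution on X̃, let d : X × X̃ → ℝ and β ∈ ℝ. Define, for any conditional kernel w from X to X̃, G(w, q) = Σ_{x,x̃} p(x) w(x̃|x) log( w(x̃|x)/q(x̃) ) + β Σ_{x,x̃} p(x) w(x̃|x) d(x,x̃) (convention 0 · log 0 = 0). Then the kernel w*(x̃|x) = q(x̃) exp(−β d(x,x̃)) / Z(x,β), with Z(x,β) = Σ_{x̃} q(x̃) exp(−β d(x,x̃)), satisfies G(w*, q) ≤ G(w, q) for every conditional kernel w, and the minimum value is G(w*, q) = − Σ_x p(x) log Z(x,β). -/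
open Finset

/-- `G(w,q) = Σ_{x,x̃} p(x) w(x̃|x) log(w(x̃|x)/q(x̃)) + β Σ_{x,x̃} p(x) w(x̃|x) d(x,x̃)`. -/
noncomputable def baG {X Xt : Type*} [Fintype X] [Fintype Xt]
    (p : X → ℝ) (q : Xt → ℝ) (d : X → Xt → ℝ) (β : ℝ) (w : X → Xt → ℝ) : ℝ :=
  (∑ x, ∑ t, p x * w x t * Real.log (w x t / q t))
    + β * ∑ x, ∑ t, p x * w x t * d x t

/-- Gibbs' inequality (nonnegativity of relative entropy). -/
lemma gibbs_aux {ι : Type*} [Fintype ι] (a b : ι → ℝ)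
    (ha : ∀ i, 0 ≤ a i) (hb : ∀ i, 0 < b i)
    (hsa : ∑ i, a i = 1) (hsb : ∑ i, b i = 1) :
    0 ≤ ∑ i, a i * Real.log (a i / b i) := by
  have key : ∀ i, a i * Real.log (b i / a i) ≤ b i - a i := by
    intro i
    rcases eq_or_lt_of_le (ha i) with h | h
    · simp [← h, (hb i).le]
    · have hlog : Real.log (b i / a i) ≤ b i / a i - 1 :=
        Real.log_le_sub_one_of_pos (div_pos (hb i) h)
      have := mul_le_mul_of_nonneg_left hlog (ha i)
      calc a i * Real.log (b i / a i) ≤ a i * (b i / a i - 1) := this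
        _ = b i - a i := by field_simp
  have hflip : ∀ i, a i * Real.log (a i / b i) = -(a i * Real.log (b i / a i)) := by
    intro i
    rcases eq_or_lt_of_le (ha i) with h | h
    · simp [← h]
    · rw [Real.log_div h.ne' (hb i).ne', Real.log_div (hb i).ne' h.ne']; ring
  have hsum : ∑ i, a i * Real.log (b i / a i) ≤ 0 := by
    calc ∑ i, a i * Real.log (b i / a i) ≤ ∑ i, (b i - a i) :=
          Finset.sum_le_sum (fun i _ => key i)
      _ = 0 := by rw [Finset.sum_sub_distrib, hsa, hsb]; ring
  simp only [hflip, Finset.sum_neg_distrib]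
  linarith

/-- Blahut–Arimoto step, minimization over the conditional:
for fixed strictly positive `q`, the Boltzmann kernel
`w*(x̃|x) = q(x̃) exp(−β d(x,x̃)) / Z(x,β)` minimizes `G(·, q)` over all conditional kernels,
and the minimum value is `−Σ_x p(x) log Z(x,β)`. -/
theorem ba_min_over_conditional
    {X Xt : Type*} [Fintype X] [Fintype Xt]
    (p : X → ℝ) (hp : ∀ x, 0 < p x) (hpsum : ∑ x, p x = 1)
    (q : Xt → ℝ) (hq : ∀ t, 0 < q t) (hqsum : ∑ t, q t = 1)
    (d : X → Xt → ℝ) (β : ℝ)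
    (wstar : X → Xt → ℝ)
    (hwstar : ∀ x t, wstar x t
      = q t * Real.exp (-β * d x t) / ∑ t', q t' * Real.exp (-β * d x t')) :
    (∀ w : X → Xt → ℝ, (∀ x t, 0 ≤ w x t) → (∀ x, ∑ t, w x t = 1) →
        baG p q d β wstar ≤ baG p q d β w)
      ∧ baG p q d β wstar
        = -∑ x, p x * Real.log (∑ t, q t * Real.exp (-β * d x t)) := by
  set Z : X → ℝ := fun x => ∑ t, q t * Real.exp (-β * d x t) with hZdef
  have hne : (Finset.univ : Finset Xt).Nonempty := by
    by_contra h
    rw [Finset.not_nonempty_iff_eq_empty] at h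
    rw [h, Finset.sum_empty] at hqsum
    norm_num at hqsum
  have hZpos : ∀ x, 0 < Z x := fun x =>
    Finset.sum_pos (fun t _ => mul_pos (hq t) (Real.exp_pos _)) hne
  have hwspos : ∀ x t, 0 < wstar x t := by
    intro x t
    rw [hwstar]
    exact div_pos (mul_pos (hq t) (Real.exp_pos _)) (hZpos x)
  have hwssum : ∀ x, ∑ t, wstar x t = 1 := by
    intro x
    simp only [hwstar]
    rw [← Finset.sum_div, div_self (hZpos x).ne']
  -- pointwise identity: for v ≥ 0,
  -- v * log (v / q t) + v * (β * d x t) = v * log (v / wstar x t) - v * log (Z x)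
  have hpt : ∀ (x : X) (t : Xt) (v : ℝ), 0 ≤ v →
      v * Real.log (v / q t) + β * (v * d x t)
        = v * Real.log (v / wstar x t) - v * Real.log (Z x) := by
    intro x t v hv
    rcases eq_or_lt_of_le hv with h | h
    · simp [← h]
    · have hws := hwspos x t
      rw [Real.log_div h.ne' (hq t).ne', Real.log_div h.ne' hws.ne',
        hwstar, Real.log_div (mul_pos (hq t) (Real.exp_pos _)).ne' (hZpos x).ne',
        Real.log_mul (hq t).ne' (Real.exp_pos _).ne', Real.log_exp]
      ring
  -- main decomposition
  have hdecomp : ∀ w : X → Xt → ℝ, (∀ x t, 0 ≤ w x t) → (∀ x, ∑ t, w x t = 1) →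
      baG p q d β w
        = (∑ x, p x * ∑ t, w x t * Real.log (w x t / wstar x t))
            - ∑ x, p x * Real.log (Z x) := by
    intro w hw hwsum
    unfold baG
    rw [Finset.mul_sum, ← Finset.sum_sub_distrib, ← Finset.sum_add_distrib]
    refine Finset.sum_congr rfl (fun x _ => ?_)
    have : ∑ t, w x t * Real.log (w x t / wstar x t) - Real.log (Z x)
        = ∑ t, (w x t * Real.log (w x t / wstar x t) - w x t * Real.log (Z x)) := by
      rw [Finset.sum_sub_distrib, ← Finset.sum_mul, hwsum x, one_mul]
    have lhs_eq : (∑ t, p x * w x t * Real.log (w x t / q t))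
        + β * ∑ t, p x * w x t * d x t
        = p x * ∑ t, (w x t * Real.log (w x t / q t) + β * (w x t * d x t)) := by
      simp only [Finset.mul_sum, mul_add, Finset.sum_add_distrib]
      congr 1 <;> exact Finset.sum_congr rfl (fun t _ => by ring)
    rw [lhs_eq,
      Finset.sum_congr rfl (fun t _ => hpt x t (w x t) (hw x t)), ← this, mul_sub]
  have hstar : baG p q d β wstar = -∑ x, p x * Real.log (Z x) := by
    rw [hdecomp wstar (fun x t => (hwspos x t).le) hwssum]
    have : ∀ x, ∑ t, wstar x t * Real.log (wstar x t / wstar x t) = 0 := by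
      intro x
      refine Finset.sum_eq_zero (fun t _ => ?_)
      rw [div_self (hwspos x t).ne', Real.log_one, mul_zero]
    simp only [this, mul_zero, Finset.sum_const_zero, zero_sub]
  refine ⟨fun w hw hwsum => ?_, hstar⟩
  rw [hstar, hdecomp w hw hwsum]
  have hnn : 0 ≤ ∑ x, p x * ∑ t, w x t * Real.log (w x t / wstar x t) := by
    refine Finset.sum_nonneg (fun x _ => mul_nonneg (hp x).le ?_)
    exact gibbs_aux (w x) (wstar x) (hw x) (hwspos x) (hwsum x) (hwssum x)
  linarith
end

section
/- (Theorem 2: monotone convergence of the Blahut–Arimoto algorithm.) Let p be a strictly positive probability distribution on X, d : X × X̃ → ℝ with d ≥ 0, and β > 0. Define G(w,q) = Σ_{x,x̃} p(x) w(x̃|x) log( w(x̃|x)/q(x̃) ) + β Σ_{x,x̃} p(x) w(x̃|x) d(x,x̃). Starting from a strictly positive distribution q_0 on X̃, define the alternating iterations w_t(x̃|x) = q_t(x̃) exp(−β d(x,x̃)) / Z_t(x,β) with Z_t(x,β) = Σ_{x̃} q_t(x̃) exp(−β d(x,x̃)), and q_{t+1}(x̃) = Σ_x p(x) w_t(x̃|x).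 Then the sequence G(w_t, q_t) is nonincreasing in t, satisfies G(w_t, q_t) ≥ 0 for all t, and hence converges as t → ∞. -/
open Finset

lemma gibbs {S : Type*} [Fintype S] (a b : S → ℝ) (ha : ∀ s, 0 < a s)
    (hb : ∀ s, 0 < b s) (hA : ∑ s, a s = 1) (hB : ∑ s, b s = 1) :
    0 ≤ ∑ s, a s * Real.log (a s / b s) := by
  have h : ∀ s ∈ Finset.univ, a s * Real.log (b s / a s) ≤ b s - a s := by
    intro s _
    have hlog := Real.log_le_sub_one_of_pos (div_pos (hb s) (ha s))
    have h2 := mul_le_mul_of_nonneg_left hlog (ha s).le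
    calc a s * Real.log (b s / a s) ≤ a s * (b s / a s - 1) := h2
      _ = b s - a s := by rw [mul_sub, mul_div_cancel₀ _ (ha s).ne']; ring
  have hsum : ∑ s, a s * Real.log (b s / a s) ≤ 0 := by
    calc ∑ s, a s * Real.log (b s / a s) ≤ ∑ s, (b s - a s) := Finset.sum_le_sum h
      _ = 0 := by rw [Finset.sum_sub_distrib, hA, hB]; ring
  have heq : ∑ s, a s * Real.log (a s / b s) = - ∑ s, a s * Real.log (b s / a s) := by
    rw [← Finset.sum_neg_distrib]
    refine Finset.sum_congr rfl fun s _ => ?_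
    rw [Real.log_div (ha s).ne' (hb s).ne', Real.log_div (hb s).ne' (ha s).ne']
    ring
  linarith

lemma baG_decomp {X Xt : Type*} [Fintype X] [Fintype Xt]
    (p : X → ℝ) (q' : Xt → ℝ) (hq' : ∀ t, 0 < q' t)
    (d : X → Xt → ℝ) (β : ℝ)
    (w ws : X → Xt → ℝ) (hwpos : ∀ x t, 0 < w x t) (hwsum : ∀ x, ∑ t, w x t = 1)
    (hws : ∀ x t, ws x t = q' t * Real.exp (-β * d x t) / ∑ t', q' t' * Real.exp (-β * d x t'))
    (hZ : ∀ x, 0 < ∑ t', q' t' * Real.exp (-β * d x t')) :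
    baG p q' d β w = (∑ x, p x * ∑ t, w x t * Real.log (w x t / ws x t))
      - ∑ x, p x * Real.log (∑ t', q' t' * Real.exp (-β * d x t')) := by
  have key : ∀ x, ∑ t, w x t * Real.log (w x t / q' t) + β * ∑ t, w x t * d x t
      = (∑ t, w x t * Real.log (w x t / ws x t))
        - Real.log (∑ t', q' t' * Real.exp (-β * d x t')) := by
    intro x
    have hpt : ∀ t, w x t * Real.log (w x t / ws x t)
        = w x t * Real.log (w x t / q' t) + β * (w x t * d x t)
          + w x t * Real.log (∑ t', q' t' * Real.exp (-β * d x t')) := by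
      intro t
      rw [hws]
      have he : Real.exp (-β * d x t) ≠ 0 := (Real.exp_pos _).ne'
      rw [Real.log_div (hwpos x t).ne' (div_pos (mul_pos (hq' t) (Real.exp_pos _)) (hZ x)).ne',
        Real.log_div (mul_ne_zero (hq' t).ne' he) (hZ x).ne',
        Real.log_mul (hq' t).ne' he, Real.log_exp,
        Real.log_div (hwpos x t).ne' (hq' t).ne']
      ring
    have hsum : ∑ t, w x t * Real.log (w x t / ws x t)
        = (∑ t, w x t * Real.log (w x t / q' t)) + β * (∑ t, w x t * d x t)
          + Real.log (∑ t', q' t' * Real.exp (-β * d x t')) := by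
      rw [Finset.sum_congr rfl (fun t _ => hpt t), Finset.sum_add_distrib,
        Finset.sum_add_distrib, ← Finset.mul_sum, ← Finset.sum_mul, hwsum x, one_mul]
    linarith
  have hrw : baG p q' d β w
      = ∑ x, p x * (∑ t, w x t * Real.log (w x t / q' t) + β * ∑ t, w x t * d x t) := by
    simp only [baG, mul_add, Finset.sum_add_distrib, Finset.mul_sum, mul_assoc]
    congr 1
    exact Finset.sum_congr rfl fun x _ => Finset.sum_congr rfl fun t _ => by ring
  rw [hrw, Finset.sum_congr rfl (fun x _ => by rw [key x]), ← Finset.sum_sub_distrib]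
  refine Finset.sum_congr rfl fun x _ => ?_
  ring

/-- Theorem 2, monotone convergence of the Blahut–Arimoto algorithm:
with `d ≥ 0`, `β > 0`, starting from a strictly positive distribution `q 0` and iterating
`w_t(x̃|x) = q_t(x̃) exp(−β d(x,x̃))/Z_t(x,β)`, `q_{t+1}(x̃) = Σ_x p(x) w_t(x̃|x)`, the values
`G(w_t, q_t)` are nonincreasing, nonnegative, and hence converge. -/
theorem ba_monotone_convergence
    {X Xt : Type*} [Fintype X] [Fintype Xt]
    (p : X → ℝ) (hp : ∀ x, 0 < p x) (hpsum : ∑ x, p x = 1)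
    (d : X → Xt → ℝ) (hd : ∀ x t, 0 ≤ d x t) (β : ℝ) (hβ : 0 < β)
    (q : ℕ → Xt → ℝ) (w : ℕ → X → Xt → ℝ)
    (hq0pos : ∀ t, 0 < q 0 t) (hq0sum : ∑ t, q 0 t = 1)
    (hw : ∀ n x t, w n x t
      = q n t * Real.exp (-β * d x t) / ∑ t', q n t' * Real.exp (-β * d x t'))
    (hqsucc : ∀ n t, q (n + 1) t = ∑ x, p x * w n x t) :
    Antitone (fun n => baG p (q n) d β (w n))
      ∧ (∀ n, 0 ≤ baG p (q n) d β (w n))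
      ∧ ∃ L : ℝ, Filter.Tendsto (fun n => baG p (q n) d β (w n)) Filter.atTop (nhds L) := by
  haveI hXt : Nonempty Xt := by
    by_contra h
    rw [not_nonempty_iff] at h
    rw [Finset.univ_eq_empty, Finset.sum_empty] at hq0sum
    norm_num at hq0sum
  haveI hX : Nonempty X := by
    by_contra h
    rw [not_nonempty_iff] at h
    rw [Finset.univ_eq_empty, Finset.sum_empty] at hpsum
    norm_num at hpsum
  have hZpos : ∀ (f : Xt → ℝ), (∀ t, 0 < f t) →
      ∀ x : X, 0 < ∑ t', f t' * Real.exp (-β * d x t') := fun f hf x =>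
    Finset.sum_pos (fun t _ => mul_pos (hf t) (Real.exp_pos _)) Finset.univ_nonempty
  have hqprop : ∀ n, (∀ t, 0 < q n t) ∧ ∑ t, q n t = 1 := by
    intro n
    induction n with
    | zero => exact ⟨hq0pos, hq0sum⟩
    | succ n ih =>
      obtain ⟨hpos, hsum⟩ := ih
      have hZ := hZpos (q n) hpos
      have hwp : ∀ x t, 0 < w n x t := fun x t => by
        rw [hw]; exact div_pos (mul_pos (hpos t) (Real.exp_pos _)) (hZ x)
      have hwsum : ∀ x, ∑ t, w n x t = 1 := fun x => by
        simp only [hw]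
        rw [← Finset.sum_div, div_self (hZ x).ne']
      constructor
      · intro t
        rw [hqsucc]
        exact Finset.sum_pos (fun x _ => mul_pos (hp x) (hwp x t)) Finset.univ_nonempty
      · calc ∑ t, q (n+1) t = ∑ t, ∑ x, p x * w n x t := by simp only [hqsucc]
          _ = ∑ x, ∑ t, p x * w n x t := Finset.sum_comm
          _ = ∑ x, p x * ∑ t, w n x t := by
              exact Finset.sum_congr rfl fun x _ => (Finset.mul_sum _ _ _).symm
          _ = 1 := by simp only [hwsum, mul_one]; exact hpsum
  have hqpos : ∀ n t, 0 < q n t := fun n => (hqprop n).1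
  have hqsum : ∀ n, ∑ t, q n t = 1 := fun n => (hqprop n).2
  have hZ : ∀ n x, 0 < ∑ t', q n t' * Real.exp (-β * d x t') := fun n =>
    hZpos (q n) (hqpos n)
  have hwp : ∀ n x t, 0 < w n x t := fun n x t => by
    rw [hw]; exact div_pos (mul_pos (hqpos n t) (Real.exp_pos _)) (hZ n x)
  have hwsm : ∀ n x, ∑ t, w n x t = 1 := fun n x => by
    simp only [hw]
    rw [← Finset.sum_div, div_self (hZ n x).ne']
  have hnonneg : ∀ n, 0 ≤ baG p (q n) d β (w n) := by
    intro n
    have h1 : 0 ≤ ∑ x, ∑ t, p x * w n x t * Real.log (w n x t / q n t) := by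
      refine Finset.sum_nonneg fun x _ => ?_
      have hg := gibbs (w n x) (q n) (hwp n x) (hqpos n) (hwsm n x) (hqsum n)
      have heq : ∑ t, p x * w n x t * Real.log (w n x t / q n t)
          = p x * ∑ t, w n x t * Real.log (w n x t / q n t) := by
        rw [Finset.mul_sum]; exact Finset.sum_congr rfl fun t _ => by ring
      rw [heq]; exact mul_nonneg (hp x).le hg
    have h2 : 0 ≤ ∑ x, ∑ t, p x * w n x t * d x t :=
      Finset.sum_nonneg fun x _ => Finset.sum_nonneg fun t _ =>
        mul_nonneg (mul_nonneg (hp x).le (hwp n x t).le) (hd x t)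
    have h3 : 0 ≤ β * ∑ x, ∑ t, p x * w n x t * d x t := mul_nonneg hβ.le h2
    simp only [baG]
    linarith
  have hstep : ∀ n, baG p (q (n+1)) d β (w (n+1)) ≤ baG p (q n) d β (w n) := by
    intro n
    have hA : baG p (q (n+1)) d β (w n) ≤ baG p (q n) d β (w n) := by
      have hdiff : (∑ x, ∑ t, p x * w n x t * Real.log (w n x t / q n t))
          - (∑ x, ∑ t, p x * w n x t * Real.log (w n x t / q (n+1) t))
          = ∑ t, q (n+1) t * Real.log (q (n+1) t / q n t) := by
        calc (∑ x, ∑ t, p x * w n x t * Real.log (w n x t / q n t))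
            - (∑ x, ∑ t, p x * w n x t * Real.log (w n x t / q (n+1) t))
            = ∑ x, ∑ t, (Real.log (q (n+1) t) - Real.log (q n t)) * (p x * w n x t) := by
              rw [← Finset.sum_sub_distrib]
              refine Finset.sum_congr rfl fun x _ => ?_
              rw [← Finset.sum_sub_distrib]
              refine Finset.sum_congr rfl fun t _ => ?_
              rw [Real.log_div (hwp n x t).ne' (hqpos n t).ne',
                Real.log_div (hwp n x t).ne' (hqpos (n+1) t).ne']
              ring
          _ = ∑ t, ∑ x, (Real.log (q (n+1) t) - Real.log (q n t)) * (p x * w n x t) :=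
              Finset.sum_comm
          _ = ∑ t, (Real.log (q (n+1) t) - Real.log (q n t)) * ∑ x, p x * w n x t := by
              exact Finset.sum_congr rfl fun t _ => (Finset.mul_sum _ _ _).symm
          _ = ∑ t, q (n+1) t * Real.log (q (n+1) t / q n t) := by
              refine Finset.sum_congr rfl fun t _ => ?_
              rw [← hqsucc, Real.log_div (hqpos (n+1) t).ne' (hqpos n t).ne']
              ring
      have hg := gibbs (q (n+1)) (q n) (hqpos (n+1)) (hqpos n) (hqsum (n+1)) (hqsum n)
      simp only [baG]
      linarith
    have hB : baG p (q (n+1)) d β (w (n+1)) ≤ baG p (q (n+1)) d β (w n) := by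
      have e1 := baG_decomp p (q (n+1)) (hqpos (n+1)) d β (w n) (w (n+1)) (hwp n)
        (hwsm n) (hw (n+1)) (hZ (n+1))
      have e2 := baG_decomp p (q (n+1)) (hqpos (n+1)) d β (w (n+1)) (w (n+1)) (hwp (n+1))
        (hwsm (n+1)) (hw (n+1)) (hZ (n+1))
      have h0 : ∑ x, p x * ∑ t, w (n+1) x t * Real.log (w (n+1) x t / w (n+1) x t) = 0 := by
        refine Finset.sum_eq_zero fun x _ => ?_
        rw [Finset.sum_eq_zero fun t _ => by
          rw [div_self (hwp (n+1) x t).ne', Real.log_one, mul_zero], mul_zero]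
      have hKL : 0 ≤ ∑ x, p x * ∑ t, w n x t * Real.log (w n x t / w (n+1) x t) :=
        Finset.sum_nonneg fun x _ => mul_nonneg (hp x).le
          (gibbs (w n x) (w (n+1) x) (hwp n x) (hwp (n+1) x) (hwsm n x) (hwsm (n+1) x))
      rw [e1, e2, h0]
      linarith
    linarith
  have hanti : Antitone (fun n => baG p (q n) d β (w n)) := antitone_nat_of_succ_le hstep
  refine ⟨hanti, hnonneg, ?_⟩
  exact ⟨_, tendsto_atTop_ciInf hanti
    ⟨0, fun y hy => by obtain ⟨n, rfl⟩ := hy; exact hnonneg n⟩⟩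
end

section
/- (Joint convexity of the rate-distortion functional.) Let p be a probability distribution on X, d : X × X̃ → ℝ, and β ≥ 0. Then the functional G(w,q) = Σ_{x,x̃} p(x) w(x̃|x) log( w(x̃|x)/q(x̃) ) + β Σ_{x,x̃} p(x) w(x̃|x) d(x,x̃) is jointly convex in the pair (w, q) on the convex set of pairs consisting of a conditional kernel w from X to X̃ and a strictly positive probability distribution q on X̃ (with the convention 0 · log 0 = 0). -/
/-!
Each summand `p(x) w log(w/q)` of `G` is `p(x)` times the perspective `v φ(u/v)` of the convex
function `φ(x) = x log x`, and the perspective of a convex function is jointly convex: with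
`v = a v₁ + b v₂`, the point `(a u₁ + b u₂)/v` is the convex combination of `u₁/v₁` and `u₂/v₂`
with weights `a v₁/v` and `b v₂/v`. The distortion term is linear in `w`.
-/

open Finset

open Real

lemma div_add_div_eq_convex_comb {u₁ u₂ v₁ v₂ a b : ℝ} (hv₁ : v₁ ≠ 0) (hv₂ : v₂ ≠ 0)
    (hv : a * v₁ + b * v₂ ≠ 0) :
    (a * u₁ + b * u₂) / (a * v₁ + b * v₂)
      = a * v₁ / (a * v₁ + b * v₂) * (u₁ / v₁) + b * v₂ / (a * v₁ + b * v₂) * (u₂ / v₂) := by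
  field_simp

theorem ConvexOn.perspective {s : Set ℝ} {φ : ℝ → ℝ} (hφ : ConvexOn ℝ s φ) :
    ConvexOn ℝ {z : ℝ × ℝ | 0 < z.2 ∧ z.1 / z.2 ∈ s} (fun z => z.2 * φ (z.1 / z.2)) := by
  have key : ∀ ⦃z₁ z₂ : ℝ × ℝ⦄, 0 < z₁.2 ∧ z₁.1 / z₁.2 ∈ s → 0 < z₂.2 ∧ z₂.1 / z₂.2 ∈ s →
      ∀ ⦃a b : ℝ⦄, 0 ≤ a → 0 ≤ b → a + b = 1 →
      0 < (a • z₁ + b • z₂).2 ∧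
        (a • z₁ + b • z₂).1 / (a • z₁ + b • z₂).2 ∈ s ∧
        (a • z₁ + b • z₂).2 * φ ((a • z₁ + b • z₂).1 / (a • z₁ + b • z₂).2)
          ≤ a • (z₁.2 * φ (z₁.1 / z₁.2)) + b • (z₂.2 * φ (z₂.1 / z₂.2)) := by
    rintro ⟨u₁, v₁⟩ ⟨u₂, v₂⟩ ⟨hv₁, hs₁⟩ ⟨hv₂, hs₂⟩ a b ha hb hab
    simp only [Prod.smul_mk, Prod.mk_add_mk, smul_eq_mul] at *
    have hv : 0 < a * v₁ + b * v₂ := by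
      rcases ha.eq_or_lt with rfl | ha'
      · simp_all
      · positivity
    have hw₁ : 0 ≤ a * v₁ / (a * v₁ + b * v₂) := by positivity
    have hw₂ : 0 ≤ b * v₂ / (a * v₁ + b * v₂) := by positivity
    have hw : a * v₁ / (a * v₁ + b * v₂) + b * v₂ / (a * v₁ + b * v₂) = 1 := by
      field_simp
    rw [div_add_div_eq_convex_comb hv₁.ne' hv₂.ne' hv.ne']
    refine ⟨hv, hφ.1 hs₁ hs₂ hw₁ hw₂ hw, ?_⟩
    calc (a * v₁ + b * v₂) * φ (a * v₁ / (a * v₁ + b * v₂) * (u₁ / v₁)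
            + b * v₂ / (a * v₁ + b * v₂) * (u₂ / v₂))
        ≤ (a * v₁ + b * v₂) * (a * v₁ / (a * v₁ + b * v₂) * φ (u₁ / v₁)
            + b * v₂ / (a * v₁ + b * v₂) * φ (u₂ / v₂)) :=
          mul_le_mul_of_nonneg_left (hφ.2 hs₁ hs₂ hw₁ hw₂ hw) hv.le
      _ = a * (v₁ * φ (u₁ / v₁)) + b * (v₂ * φ (u₂ / v₂)) := by
          field_simp
  exact ⟨fun z₁ h₁ z₂ h₂ a b ha hb hab => ⟨(key h₁ h₂ ha hb hab).1, (key h₁ h₂ ha hb hab).2.1⟩,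
    fun z₁ h₁ z₂ h₂ a b ha hb hab => (key h₁ h₂ ha hb hab).2.2⟩

lemma convexOn_mul_log_div :
    ConvexOn ℝ (Set.Ici 0 ×ˢ Set.Ioi 0) (fun z : ℝ × ℝ => z.1 * log (z.1 / z.2)) := by
  have hsub : Set.Ici (0 : ℝ) ×ˢ Set.Ioi 0 ⊆ {z : ℝ × ℝ | 0 < z.2 ∧ z.1 / z.2 ∈ Set.Ici 0} :=
    fun _ ⟨h₁, h₂⟩ => ⟨h₂, Set.mem_Ici.mpr (div_nonneg h₁ (le_of_lt h₂))⟩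
  refine (convexOn_mul_log.perspective.subset hsub ((convex_Ici 0).prod (convex_Ioi 0))).congr
    fun z hz => ?_
  have : z.2 ≠ 0 := (Set.mem_Ioi.mp hz.2).ne'
  simp only
  field_simp

lemma mul_mul_log_div_convex_comb_le {p u₁ u₂ v₁ v₂ a b : ℝ} (hp : 0 ≤ p) (hu₁ : 0 ≤ u₁)
    (hu₂ : 0 ≤ u₂) (hv₁ : 0 < v₁) (hv₂ : 0 < v₂) (ha : 0 ≤ a) (hb : 0 ≤ b) (hab : a + b = 1) :
    p * (a * u₁ + b * u₂) * log ((a * u₁ + b * u₂) / (a * v₁ + b * v₂))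
      ≤ a * (p * u₁ * log (u₁ / v₁)) + b * (p * u₂ * log (u₂ / v₂)) := by
  have h := convexOn_mul_log_div.2 (x := (u₁, v₁)) (y := (u₂, v₂)) ⟨hu₁, hv₁⟩ ⟨hu₂, hv₂⟩ ha hb hab
  simp only [Prod.smul_mk, Prod.mk_add_mk, smul_eq_mul] at h
  linear_combination p * h

theorem baG_jointly_convex_general
    {X Xt : Type*} [Fintype X] [Fintype Xt]
    (p : X → ℝ) (hp : ∀ x, 0 ≤ p x)
    (d : X → Xt → ℝ) (β : ℝ)
    (w₁ w₂ : X → Xt → ℝ)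
    (hw₁ : ∀ x t, 0 ≤ w₁ x t)
    (hw₂ : ∀ x t, 0 ≤ w₂ x t)
    (q₁ q₂ : Xt → ℝ)
    (hq₁ : ∀ t, 0 < q₁ t)
    (hq₂ : ∀ t, 0 < q₂ t)
    (a b : ℝ) (ha : 0 ≤ a) (hb : 0 ≤ b) (hab : a + b = 1) :
    baG p (fun t => a * q₁ t + b * q₂ t) d β (fun x t => a * w₁ x t + b * w₂ x t)
      ≤ a * baG p q₁ d β w₁ + b * baG p q₂ d β w₂ := by
  have hent : ∑ x, ∑ t, p x * (a * w₁ x t + b * w₂ x t) *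
        log ((a * w₁ x t + b * w₂ x t) / (a * q₁ t + b * q₂ t))
      ≤ a * ∑ x, ∑ t, p x * w₁ x t * log (w₁ x t / q₁ t)
        + b * ∑ x, ∑ t, p x * w₂ x t * log (w₂ x t / q₂ t) := by
    simp only [mul_sum, ← sum_add_distrib]
    gcongr with x _ t _
    exact mul_mul_log_div_convex_comb_le (hp x) (hw₁ x t) (hw₂ x t) (hq₁ t) (hq₂ t) ha hb hab
  have hdist : ∑ x, ∑ t, p x * (a * w₁ x t + b * w₂ x t) * d x t
      = a * ∑ x, ∑ t, p x * w₁ x t * d x t + b * ∑ x, ∑ t, p x * w₂ x t * d x t := by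
    simp only [mul_sum, ← sum_add_distrib]
    congr! 2 with x _ t _
    ring
  unfold baG
  linear_combination hent + β * hdist

/-- Joint convexity of the rate-distortion functional: for `β ≥ 0`, the
functional `G(w,q)` is jointly convex on pairs of a conditional kernel `w` and a strictly
positive distribution `q` (with the convention `0 log 0 = 0`). -/
theorem baG_jointly_convex
    {X Xt : Type*} [Fintype X] [Fintype Xt]
    (p : X → ℝ) (hp : ∀ x, 0 ≤ p x) (hpsum : ∑ x, p x = 1)
    (d : X → Xt → ℝ) (β : ℝ) (hβ : 0 ≤ β)
    (w₁ w₂ : X → Xt → ℝ)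
    (hw₁ : ∀ x t, 0 ≤ w₁ x t) (hw₁sum : ∀ x, ∑ t, w₁ x t = 1)
    (hw₂ : ∀ x t, 0 ≤ w₂ x t) (hw₂sum : ∀ x, ∑ t, w₂ x t = 1)
    (q₁ q₂ : Xt → ℝ)
    (hq₁ : ∀ t, 0 < q₁ t) (hq₁sum : ∑ t, q₁ t = 1)
    (hq₂ : ∀ t, 0 < q₂ t) (hq₂sum : ∑ t, q₂ t = 1)
    (a b : ℝ) (ha : 0 ≤ a) (hb : 0 ≤ b) (hab : a + b = 1) :
    baG p (fun t => a * q₁ t + b * q₂ t) d β (fun x t => a * w₁ x t + b * w₂ x t)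
      ≤ a * baG p q₁ d β w₁ + b * baG p q₂ d β w₂ :=
  baG_jointly_convex_general p hp d β w₁ w₂ hw₁ hw₂ q₁ q₂ hq₁ hq₂ a b ha hb hab
end

section
/- (Gradient of the information bottleneck Lagrangian, Eq. (E8).) Let p be a joint probability distribution on X × Y with strictly positive marginals p_X, p_Y and conditionals p(y|x) = p(x,y)/p_X(x), and let β ∈ ℝ. For a strictly positive conditional kernel w from X to X̃, define the induced distributions q_w(x̃) = Σ_x p_X(x) w(x̃|x) and r_w(y|x̃) = (Σ_x p(x,y) w(x̃|x)) / q_w(x̃), and define L(w) = I(X;X̃) − β I(X̃;Y), the mutual informations being those of the joint distribution p(x,y) w(x̃|x), regarded as a smooth function of the vector (w(x̃|x))_{(x,x̃)} ∈ ℝ^{X×X̃} on a neighborhood of w on which all relevant quantities stay positive (normalization not imposed). Then for every x ∈ X and x̃ ∈ X̃, ∂L/∂w(x̃|x) = p_X(x) [ log( w(x̃|x)/q_w(x̃) ) − β Σ_y p(y|x) log( r_w(y|x̃)/p_Y(y) ) ]. -/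
open Finset

/-- The information bottleneck Lagrangian `L(v) = I(X;X̃) − β I(X̃;Y)` of the joint
distribution `p(x,y) v(x̃|x)`, regarded as a function of the unnormalized vector
`v ∈ ℝ^{X×X̃}`. Here the marginal of `X` is `pX(x) = Σ_y p(x,y)`, the induced marginal of
`X̃` is `q_v(x̃) = Σ_x pX(x) v(x̃|x)`, the joint of `(X̃,Y)` is `m(x̃,y) = Σ_x p(x,y) v(x̃|x)`,
and the marginal of `Y` is `pY(y) = Σ_x p(x,y)`. -/
noncomputable def ibLagrangian {X Y Xt : Type*} [Fintype X] [Fintype Y] [Fintype Xt]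
    (p : X → Y → ℝ) (β : ℝ) (v : X × Xt → ℝ) : ℝ :=
  (∑ x, ∑ t, (∑ y, p x y) * v (x, t)
      * Real.log (v (x, t) / (∑ x', (∑ y, p x' y) * v (x', t))))
    - β * ∑ t, ∑ y, (∑ x, p x y * v (x, t))
      * Real.log ((∑ x, p x y * v (x, t))
          / ((∑ x', (∑ y', p x' y') * v (x', t)) * (∑ x', p x' y)))

/-!
`L` is a sum over `x̃` of terms that each depend only on the column `w(·|x̃)`, so the partial
derivative in `w(x̃|x)` is that of a single column term. Both parts of a column term have the
shape `Σₖ Mₖ log (Mₖ / (Q aₖ))` with `Mₖ`, `Q` linear in the column and `Σₖ Mₖ = Q`.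
Differentiating, the contributions of the logarithm add up to `Σₖ Mₖ' - Q' = 0`, so only
`Σₖ Mₖ' log (Mₖ / (Q aₖ))` survives, and this is Eq. (E8).
-/

section

open Real

theorem hasDerivAt_mul_log_div_mul {M Q : ℝ → ℝ} {m q a s₀ : ℝ} (hM : HasDerivAt M m s₀)
    (hQ : HasDerivAt Q q s₀) (hM₀ : M s₀ ≠ 0) (hQ₀ : Q s₀ ≠ 0) (ha : a ≠ 0) :
    HasDerivAt (fun s => M s * log (M s / (Q s * a)))
      (m * log (M s₀ / (Q s₀ * a)) + (m - M s₀ * q / Q s₀)) s₀ := by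
  have hQa : Q s₀ * a ≠ 0 := mul_ne_zero hQ₀ ha
  refine (hM.fun_mul ((hM.fun_div (hQ.mul_const a) hQa).log (div_ne_zero hM₀ hQa))).congr_deriv ?_
  field_simp

theorem hasDerivAt_sum_mul_log_div_mul {ι : Type*} (S : Finset ι) {M : ι → ℝ → ℝ}
    {Q : ℝ → ℝ} {m a : ι → ℝ} {s₀ : ℝ} (hM : ∀ k ∈ S, HasDerivAt (M k) (m k) s₀)
    (hQ : HasDerivAt Q (∑ k ∈ S, m k) s₀) (hM₀ : ∀ k ∈ S, M k s₀ ≠ 0) (hQ₀ : Q s₀ ≠ 0)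
    (ha : ∀ k ∈ S, a k ≠ 0) (hsum : ∑ k ∈ S, M k s₀ = Q s₀) :
    HasDerivAt (fun s => ∑ k ∈ S, M k s * log (M k s / (Q s * a k)))
      (∑ k ∈ S, m k * log (M k s₀ / (Q s₀ * a k))) s₀ := by
  refine (HasDerivAt.fun_sum fun k hk =>
    hasDerivAt_mul_log_div_mul (hM k hk) hQ (hM₀ k hk) hQ₀ (ha k hk)).congr_deriv ?_
  rw [sum_add_distrib, sum_sub_distrib, ← sum_div, ← sum_mul, hsum,
    mul_div_cancel_left₀ _ hQ₀, sub_self, add_zero]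

theorem hasDerivAt_update_apply {X : Type*} [DecidableEq X] (u : X → ℝ) (x i : X) :
    HasDerivAt (fun s => Function.update u x s i) (Pi.single (M := fun _ => ℝ) x 1 i) (u x) :=
  hasDerivAt_pi.mp (hasDerivAt_update u x (u x)) i

theorem hasDerivAt_sum_mul_update {X : Type*} [Fintype X] [DecidableEq X] (a u : X → ℝ)
    (x : X) : HasDerivAt (fun s => ∑ i, a i * Function.update u x s i) (a x) (u x) := by
  have h := HasDerivAt.fun_sum (u := univ) fun i _ =>
    (hasDerivAt_update_apply u x i).const_mul (a i)
  simpa [Pi.single_apply] using h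

theorem sum_mul_pos_of_sum_pos {ι : Type*} {s : Finset ι} {c u : ι → ℝ}
    (hc : ∀ i ∈ s, 0 ≤ c i) (hu : ∀ i ∈ s, 0 < u i) (h : 0 < ∑ i ∈ s, c i) :
    0 < ∑ i ∈ s, c i * u i := by
  obtain ⟨i, hi, hci⟩ := (sum_pos_iff_of_nonneg hc).mp h
  exact (sum_pos_iff_of_nonneg fun j hj => mul_nonneg (hc j hj) (hu j hj).le).mpr
    ⟨i, hi, mul_pos hci (hu i hi)⟩

theorem hasDerivAt_sum_update_prod {X T : Type*} [Fintype T] [DecidableEq X] [DecidableEq T]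
    (Φ : (X → ℝ) → ℝ) (w : X × T → ℝ) (x : X) (t : T) {d : ℝ}
    (h : HasDerivAt (fun s => Φ (Function.update (fun x' => w (x', t)) x s)) d (w (x, t))) :
    HasDerivAt (fun s => ∑ t', Φ (fun x' => Function.update w (x, t) s (x', t'))) d
      (w (x, t)) := by
  refine (HasDerivAt.fun_sum (A' := Pi.single t d) fun t' _ => ?_).congr_deriv
    (by simp [sum_pi_single'])
  by_cases ht : t' = t
  · subst ht
    have hcol : ∀ s, (fun x' => Function.update w (x, t') s (x', t')) =
        Function.update (fun x' => w (x', t')) x s := fun s => by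
      ext x'
      simp [Function.update_apply]
    simpa only [hcol, Pi.single_eq_same] using h
  · simpa [Function.update_of_ne, ht] using hasDerivAt_const (w (x, t)) (Φ fun x' => w (x', t'))

variable {X Y Xt : Type*} [Fintype X] [Fintype Y] [Fintype Xt]

noncomputable def ibColumn (p : X → Y → ℝ) (β : ℝ) (u : X → ℝ) : ℝ :=
  (∑ x, (∑ y, p x y) * u x * log (u x / ∑ x', (∑ y, p x' y) * u x'))
    - β * ∑ y, (∑ x, p x y * u x)
      * log ((∑ x, p x y * u x) / ((∑ x', (∑ y', p x' y') * u x') * ∑ x', p x' y))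

theorem ibLagrangian_eq_sum_ibColumn (p : X → Y → ℝ) (β : ℝ) (v : X × Xt → ℝ) :
    ibLagrangian p β v = ∑ t, ibColumn p β (fun x => v (x, t)) := by
  rw [ibLagrangian, sum_comm, mul_sum, ← sum_sub_distrib]
  rfl

theorem hasDerivAt_ibColumn_update [DecidableEq X] (p : X → Y → ℝ) (β : ℝ) (u : X → ℝ)
    (x : X) (hp : ∀ i y, 0 ≤ p i y) (hpX : ∀ i, 0 < ∑ y, p i y)
    (hpY : ∀ y, 0 < ∑ i, p i y) (hu : ∀ i, 0 < u i) :
    HasDerivAt (fun s => ibColumn p β (Function.update u x s))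
      ((∑ y, p x y) * log (u x / ∑ i, (∑ y, p i y) * u i)
        - β * ∑ y, p x y
          * log ((∑ i, p i y * u i) / ((∑ i, (∑ y', p i y') * u i) * ∑ i, p i y)))
      (u x) := by
  have hq : 0 < ∑ i, (∑ y, p i y) * u i :=
    sum_pos (fun i _ => mul_pos (hpX i) (hu i)) ⟨x, mem_univ x⟩
  have hQ := hasDerivAt_sum_mul_update (fun i => ∑ y, p i y) u x
  have hXXt := hasDerivAt_sum_mul_log_div_mul univ
    (M := fun i s => (∑ y, p i y) * Function.update u x s i) (a := fun i => ∑ y, p i y)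
    (m := fun i => (∑ y, p i y) * Pi.single (M := fun _ => ℝ) x 1 i) (s₀ := u x)
    (fun i _ => (hasDerivAt_update_apply u x i).const_mul _)
    (by simpa [Pi.single_apply] using hQ)
    (fun i _ => by simpa using (mul_pos (hpX i) (hu i)).ne') (by simpa using hq.ne')
    (fun i _ => (hpX i).ne') (by simp)
  have hXtY := hasDerivAt_sum_mul_log_div_mul univ
    (M := fun y s => ∑ i, p i y * Function.update u x s i) (a := fun y => ∑ i, p i y)
    (s₀ := u x) (fun y _ => hasDerivAt_sum_mul_update (fun i => p i y) u x) hQ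
    (fun y _ => by
      simpa using (sum_mul_pos_of_sum_pos (fun i _ => hp i y) (fun i _ => hu i) (hpY y)).ne')
    (by simpa using hq.ne') (fun y _ => (hpY y).ne') (by simp [sum_comm (γ := X), sum_mul])
  have hcol : ∀ v, ibColumn p β v =
      (∑ i, (∑ y, p i y) * v i
          * log ((∑ y, p i y) * v i / ((∑ j, (∑ y, p j y) * v j) * ∑ y, p i y)))
        - β * ∑ y, (∑ i, p i y * v i)
          * log ((∑ i, p i y * v i) / ((∑ j, (∑ y', p j y') * v j) * ∑ i, p i y)) := fun v => by
    simp only [ibColumn, mul_comm _ (∑ y, p _ y), mul_div_mul_left _ _ (hpX _).ne']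
  simp only [hcol]
  refine (hXXt.fun_sub (hXtY.const_mul β)).congr_deriv ?_
  simp only [Function.update_eq_self, Pi.single_apply, mul_ite, mul_one, mul_zero, ite_mul,
    zero_mul, sum_ite_eq', mem_univ, if_true]
  rw [mul_comm (∑ y, p x y) (u x), mul_div_mul_right _ _ (hpX x).ne']
end

theorem ibLagrangian_partial_deriv_general
    {X Y Xt : Type*} [Fintype X] [Fintype Y] [Fintype Xt]
    [DecidableEq X] [DecidableEq Xt]
    (p : X → Y → ℝ)
    (hp : ∀ x y, 0 ≤ p x y)
    (pX : X → ℝ) (hpX : ∀ x, pX x = ∑ y, p x y) (hpXpos : ∀ x, 0 < pX x)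
    (pY : Y → ℝ) (hpY : ∀ y, pY y = ∑ x, p x y) (hpYpos : ∀ y, 0 < pY y)
    (β : ℝ)
    (w : X × Xt → ℝ) (hw : ∀ x t, 0 < w (x, t))
    (qw : Xt → ℝ) (hqw : ∀ t, qw t = ∑ x, pX x * w (x, t))
    (rw : Y → Xt → ℝ) (hrw : ∀ y t, rw y t = (∑ x, p x y * w (x, t)) / qw t)
    (x : X) (t : Xt) :
    HasDerivAt (fun s : ℝ => ibLagrangian p β (Function.update w (x, t) s))
      (pX x * (Real.log (w (x, t) / qw t)
        - β * ∑ y, (p x y / pX x) * Real.log (rw y t / pY y)))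
      (w (x, t)) := by
  have hcol := hasDerivAt_ibColumn_update p β (fun x' => w (x', t)) x hp
    (fun i => hpX i ▸ hpXpos i) (fun y => hpY y ▸ hpYpos y) (fun i => hw i t)
  simp only [ibLagrangian_eq_sum_ibColumn]
  refine (hasDerivAt_sum_update_prod (ibColumn p β) w x t hcol).congr_deriv ?_
  rw [mul_sub, mul_left_comm (pX x) β, mul_sum univ _ (pX x)]
  simp only [hqw, hrw, hpX, hpY]
  congr 2
  refine sum_congr rfl fun y _ => ?_
  rw [div_div, ← mul_assoc, mul_div_cancel₀ _ (hpX x ▸ hpXpos x).ne']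

/-- Gradient of the information bottleneck Lagrangian, Eq. (E8): at a strictly
positive conditional kernel `w`, with induced `q_w(x̃) = Σ_x pX(x) w(x̃|x)` and
`r_w(y|x̃) = (Σ_x p(x,y) w(x̃|x))/q_w(x̃)`, the partial derivative of `L` with respect to the
coordinate `w(x̃|x)` equals
`pX(x) [ log(w(x̃|x)/q_w(x̃)) − β Σ_y p(y|x) log(r_w(y|x̃)/pY(y)) ]`. -/
theorem ibLagrangian_partial_deriv
    {X Y Xt : Type*} [Fintype X] [Fintype Y] [Fintype Xt]
    [DecidableEq X] [DecidableEq Xt]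
    (p : X → Y → ℝ)
    (hp : ∀ x y, 0 ≤ p x y)
    (hpsum : ∑ x, ∑ y, p x y = 1)
    (pX : X → ℝ) (hpX : ∀ x, pX x = ∑ y, p x y) (hpXpos : ∀ x, 0 < pX x)
    (pY : Y → ℝ) (hpY : ∀ y, pY y = ∑ x, p x y) (hpYpos : ∀ y, 0 < pY y)
    (β : ℝ)
    (w : X × Xt → ℝ) (hw : ∀ x t, 0 < w (x, t))
    (hwsum : ∀ x, ∑ t, w (x, t) = 1)
    (qw : Xt → ℝ) (hqw : ∀ t, qw t = ∑ x, pX x * w (x, t))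
    (rw : Y → Xt → ℝ) (hrw : ∀ y t, rw y t = (∑ x, p x y * w (x, t)) / qw t)
    (x : X) (t : Xt) :
    HasDerivAt (fun s : ℝ => ibLagrangian p β (Function.update w (x, t) s))
      (pX x * (Real.log (w (x, t) / qw t)
        - β * ∑ y, (p x y / pX x) * Real.log (rw y t / pY y)))
      (w (x, t)) :=
  ibLagrangian_partial_deriv_general p hp pX hpX hpXpos pY hpY hpYpos β w hw qw hqw rw hrw x t
end

section
/- (Theorem 3: self-consistent equations of the information bottleneck.) Let p be a joint probability distribution on X × Y with strictly positive marginals p_X, p_Y and conditionals p(y|x), let β ∈ ℝ, and let w be a strictly positive conditional kernel from X to X̃ with induced distributions q_w(x̃) = Σ_x p_X(x) w(x̃|x) and r_w(y|x̃) = (Σ_x p(x,y) w(x̃|x)) / q_w(x̃). Define L(w) = I(X;X̃) − β I(X̃;Y) for the joint distribution p(x,y) w(x̃|x). Then w is a stationary point of L subject to the normalization constraints Σ_{x̃} w(x̃|x) = 1 for each x (i.e., there exists λ̃ : X → ℝ such that log( w(x̃|x)/q_w(x̃) ) + β D_KL( p(·|x) ‖ r_w(·|x̃) ) = λ̃(x)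 for all x, x̃) if and only if w(x̃|x) = q_w(x̃) exp( −β D_KL( p(·|x) ‖ r_w(·|x̃) ) ) / Z(x,β) for all x, x̃, where Z(x,β) = Σ_{x̃} q_w(x̃) exp( −β D_KL( p(·|x) ‖ r_w(·|x̃) ) ). -/
open Finset

private lemma ib_aux {Xt : Type*} [Fintype Xt] [Nonempty Xt] (q E W : Xt → ℝ)
    (hq : ∀ t, 0 < q t) (hE : ∀ t, 0 < E t) (hW : ∀ t, 0 < W t)
    (hWsum : ∑ t, W t = 1) :
    (∃ c : ℝ, ∀ t, Real.log (W t / q t) - Real.log (E t) = c) ↔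
      (∀ t, W t = q t * E t / ∑ t', q t' * E t') := by
  have hZpos : 0 < ∑ t', q t' * E t' :=
    Finset.sum_pos (fun t _ => mul_pos (hq t) (hE t)) Finset.univ_nonempty
  constructor
  · rintro ⟨c, hc⟩ t
    have hwq : ∀ t, W t = q t * E t * Real.exp c := by
      intro t
      have h1 : Real.log (W t / (q t * E t)) = c := by
        rw [div_mul_eq_div_div, Real.log_div (div_pos (hW t) (hq t)).ne' (hE t).ne']
        exact hc t
      have h2 : W t / (q t * E t) = Real.exp c := by
        rw [← h1, Real.exp_log (div_pos (hW t) (mul_pos (hq t) (hE t)))]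
      have := (div_eq_iff (mul_pos (hq t) (hE t)).ne').mp h2
      linarith
    have hsum : (∑ t', q t' * E t') * Real.exp c = 1 := by
      rw [Finset.sum_mul, ← hWsum]
      exact Finset.sum_congr rfl (fun t' _ => (hwq t').symm)
    rw [hwq t, eq_div_iff hZpos.ne']
    calc q t * E t * Real.exp c * (∑ t', q t' * E t')
        = q t * E t * ((∑ t', q t' * E t') * Real.exp c) := by ring
      _ = q t * E t := by rw [hsum, mul_one]
  · intro h
    refine ⟨-Real.log (∑ t', q t' * E t'), fun t => ?_⟩
    have hdiv : W t / q t = E t / ∑ t', q t' * E t' := by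
      rw [h t, div_div, mul_comm (∑ t', q t' * E t') (q t),
        mul_div_mul_left _ _ (hq t).ne']
    rw [hdiv, Real.log_div (hE t).ne' hZpos.ne']
    ring

/-- Theorem 3, self-consistent equations of the information bottleneck:
a strictly positive conditional kernel `w` with induced `q_w(x̃) = Σ_x pX(x) w(x̃|x)` and
`r_w(y|x̃) = (Σ_x p(x,y) w(x̃|x))/q_w(x̃)` is a stationary point of `L = I(X;X̃) − β I(X̃;Y)`
subject to the normalization constraints, i.e.
`∃ λ̃ : X → ℝ, ∀ x x̃, log(w(x̃|x)/q_w(x̃)) + β D_KL(p(·|x) ‖ r_w(·|x̃)) = λ̃(x)`,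
iff `w(x̃|x) = q_w(x̃) exp(−β D_KL(p(·|x) ‖ r_w(·|x̃)))/Z(x,β)` with
`Z(x,β) = Σ_{x̃} q_w(x̃) exp(−β D_KL(p(·|x) ‖ r_w(·|x̃)))`. -/
theorem ib_stationary_iff_boltzmann
    {X Y Xt : Type*} [Fintype X] [Fintype Y] [Fintype Xt]
    (p : X → Y → ℝ)
    (hp : ∀ x y, 0 ≤ p x y)
    (hpsum : ∑ x, ∑ y, p x y = 1)
    (pX : X → ℝ) (hpX : ∀ x, pX x = ∑ y, p x y) (hpXpos : ∀ x, 0 < pX x)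
    (pY : Y → ℝ) (hpY : ∀ y, pY y = ∑ x, p x y) (hpYpos : ∀ y, 0 < pY y)
    (β : ℝ)
    (w : X → Xt → ℝ) (hw : ∀ x t, 0 < w x t) (hwsum : ∀ x, ∑ t, w x t = 1)
    (qw : Xt → ℝ) (hqw : ∀ t, qw t = ∑ x, pX x * w x t)
    (rw : Y → Xt → ℝ) (hrw : ∀ y t, rw y t = (∑ x, p x y * w x t) / qw t) :
    (∃ lam : X → ℝ, ∀ x t,
        Real.log (w x t / qw t)
          + β * (∑ y, (p x y / pX x) * Real.log ((p x y / pX x) / rw y t)) = lam x)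
      ↔ (∀ x t,
        w x t = qw t
          * Real.exp (-β * ∑ y, (p x y / pX x) * Real.log ((p x y / pX x) / rw y t))
          / ∑ t', qw t'
            * Real.exp (-β * ∑ y, (p x y / pX x) * Real.log ((p x y / pX x) / rw y t'))) := by
  classical
  have hXne : Nonempty X := by
    by_contra h
    rw [not_nonempty_iff] at h
    simp at hpsum
  have hq : ∀ t, 0 < qw t := fun t => by
    rw [hqw t]
    exact Finset.sum_pos (fun x _ => mul_pos (hpXpos x) (hw x t)) Finset.univ_nonempty
  have hXtne : Nonempty Xt := by
    by_contra h
    rw [not_nonempty_iff] at h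
    obtain ⟨x⟩ := hXne
    have := hwsum x
    simp at this
  have key : ∀ x : X,
      (∃ c : ℝ, ∀ t, Real.log (w x t / qw t)
          - Real.log (Real.exp (-β * ∑ y, (p x y / pX x) * Real.log ((p x y / pX x) / rw y t)))
          = c) ↔
      (∀ t, w x t = qw t
          * Real.exp (-β * ∑ y, (p x y / pX x) * Real.log ((p x y / pX x) / rw y t))
          / ∑ t', qw t'
            * Real.exp (-β * ∑ y, (p x y / pX x) * Real.log ((p x y / pX x) / rw y t'))) :=
    fun x => ib_aux qw
      (fun t => Real.exp (-β * ∑ y, (p x y / pX x) * Real.log ((p x y / pX x) / rw y t)))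
      (w x) hq (fun t => Real.exp_pos _) (hw x) (hwsum x)
  constructor
  · rintro ⟨lam, hlam⟩ x
    refine (key x).mp ⟨lam x, fun t => ?_⟩
    rw [Real.log_exp]
    have := hlam x t
    linarith
  · intro h
    choose lam hlam using fun x => ((key x).mpr (h x))
    refine ⟨lam, fun x t => ?_⟩
    have := hlam x t
    rw [Real.log_exp] at this
    linarith
end

section
/- (Free-energy identity for the information bottleneck.) Let p be a joint probability distribution on X × Y with strictly positive marginal p_X and conditionals p(y|x), let β ∈ ℝ, and suppose the conditional kernel w, the strictly positive distribution q on X̃, and the kernel r from X̃ to Y satisfy simultaneously: q(x̃) = Σ_x p_X(x) w(x̃|x); r(y|x̃) = (Σ_x p(x,y) w(x̃|x))/q(x̃); and w(x̃|x) = q(x̃) exp( −β D_KL( p(·|x) ‖ r(·|x̃) ) ) / Z(x,β) with Z(x,β) = Σ_{x̃} q(x̃) exp( −β D_KL( p(·|x) ‖ r(·|x̃) ) ). Then I(X;X̃) + β Σ_{x,x̃} p_X(x) w(x̃|x) D_KL( p(·|x) ‖ r(·|x̃) ) = − Σ_x p_X(x) log Z(x,β), where I(X;X̃) is the mutual information of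 the joint distribution p_X(x) w(x̃|x). -/
open Finset

/-- Free-energy identity for the information bottleneck: if the conditional
kernel `w`, the strictly positive distribution `q` on `X̃`, and the kernel `r` from `X̃` to `Y`
satisfy the self-consistency conditions `q(x̃) = Σ_x pX(x) w(x̃|x)`,
`r(y|x̃) = (Σ_x p(x,y) w(x̃|x))/q(x̃)`, and
`w(x̃|x) = q(x̃) exp(−β D_KL(p(·|x) ‖ r(·|x̃)))/Z(x,β)` with
`Z(x,β) = Σ_{x̃} q(x̃) exp(−β D_KL(p(·|x) ‖ r(·|x̃)))`, then
`I(X;X̃) + β Σ_{x,x̃} pX(x) w(x̃|x) D_KL(p(·|x) ‖ r(·|x̃)) = −Σ_x pX(x) log Z(x,β)`. -/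
theorem ib_free_energy_identity
    {X Y Xt : Type*} [Fintype X] [Fintype Y] [Fintype Xt]
    (p : X → Y → ℝ)
    (hp : ∀ x y, 0 ≤ p x y)
    (hpsum : ∑ x, ∑ y, p x y = 1)
    (pX : X → ℝ) (hpX : ∀ x, pX x = ∑ y, p x y) (hpXpos : ∀ x, 0 < pX x)
    (β : ℝ)
    (w : X → Xt → ℝ)
    (q : Xt → ℝ) (hqpos : ∀ t, 0 < q t)
    (r : Y → Xt → ℝ)
    (hmarg : ∀ t, q t = ∑ x, pX x * w x t)
    (hr : ∀ y t, r y t = (∑ x, p x y * w x t) / q t)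
    (hboltz : ∀ x t, w x t
      = q t * Real.exp (-β * ∑ y, (p x y / pX x) * Real.log ((p x y / pX x) / r y t))
        / ∑ t', q t'
          * Real.exp (-β * ∑ y, (p x y / pX x) * Real.log ((p x y / pX x) / r y t'))) :
    (∑ x, ∑ t, pX x * w x t * Real.log (w x t / q t))
      + β * ∑ x, ∑ t, pX x * w x t
          * (∑ y, (p x y / pX x) * Real.log ((p x y / pX x) / r y t))
      = -∑ x, pX x * Real.log (∑ t, q t
          * Real.exp (-β * ∑ y, (p x y / pX x) * Real.log ((p x y / pX x) / r y t))) := by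
  rcases isEmpty_or_nonempty Xt with hE | hNE
  · simp
  set D : X → Xt → ℝ := fun x t => ∑ y, (p x y / pX x) * Real.log ((p x y / pX x) / r y t) with hD
  set Z : X → ℝ := fun x => ∑ t, q t * Real.exp (-β * D x t) with hZ
  have hZpos : ∀ x, 0 < Z x := fun x =>
    Finset.sum_pos (fun t _ => mul_pos (hqpos t) (Real.exp_pos _)) Finset.univ_nonempty
  have hwsum : ∀ x, ∑ t, w x t = 1 := by
    intro x
    have : ∑ t, w x t = (∑ t, q t * Real.exp (-β * D x t)) / Z x := by
      rw [Finset.sum_div]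
      exact Finset.sum_congr rfl fun t _ => hboltz x t
    rw [this, div_self (hZpos x).ne']
  have hlog : ∀ x t, Real.log (w x t / q t) = -β * D x t - Real.log (Z x) := by
    intro x t
    have hb : w x t = q t * Real.exp (-β * D x t) / Z x := hboltz x t
    have : w x t / q t = Real.exp (-β * D x t) / Z x := by
      rw [hb, div_div, mul_comm (Z x) (q t), ← div_div,
        mul_div_cancel_left₀ _ (hqpos t).ne']
    rw [this, Real.log_div (Real.exp_pos _).ne' (hZpos x).ne', Real.log_exp]
  have key : ∀ x, ∑ t, pX x * w x t * Real.log (w x t / q t)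
      = -β * ∑ t, pX x * w x t * D x t - pX x * Real.log (Z x) := by
    intro x
    have : ∀ t, pX x * w x t * Real.log (w x t / q t)
        = -β * (pX x * w x t * D x t) - pX x * Real.log (Z x) * w x t := by
      intro t; rw [hlog x t]; ring
    rw [Finset.sum_congr rfl fun t _ => this t, Finset.sum_sub_distrib,
      ← Finset.mul_sum, ← Finset.mul_sum, hwsum x, mul_one]
  calc (∑ x, ∑ t, pX x * w x t * Real.log (w x t / q t))
      + β * ∑ x, ∑ t, pX x * w x t * D x t
      = (∑ x, (-β * ∑ t, pX x * w x t * D x t - pX x * Real.log (Z x)))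
        + β * ∑ x, ∑ t, pX x * w x t * D x t := by
        rw [Finset.sum_congr rfl fun x _ => key x]
    _ = -∑ x, pX x * Real.log (Z x) := by
        rw [Finset.sum_sub_distrib, ← Finset.mul_sum]; ring
end

section
/- (Theorem 4: monotone convergence of the information bottleneck algorithm.) Let p be a joint probability distribution on X × Y with strictly positive marginal p_X and conditionals p(y|x), and β > 0. Define F(w, q, r) = Σ_{x,x̃} p_X(x) w(x̃|x) log( w(x̃|x)/q(x̃) ) + β Σ_{x,x̃} p_X(x) w(x̃|x) D_KL( p(·|x) ‖ r(·|x̃) ), for w a conditional kernel from X to X̃, q a strictly positive distribution on X̃, and r a strictly positive conditional kernel from X̃ to Y. Starting from such (q_0, r_0), define the alternating iterations: w_t(x̃|x) = q_t(x̃) exp( −β D_KL( p(·|x) ‖ r_t(·|x̃) ) ) / Z_t(x,β) with Z_t the normalization; q_{t+1}(x̃) = Σ_x p_X(x) w_t(x̃|x); and r_{t+1}(y|x̃) = Σ_x p(y|x) p_X(x) w_t(x̃|x) / q_{t+1}(x̃). Then the sequence F(w_t, q_t, r_t) is nonincreasing in t, satisfies F(w_t, q_t, r_t) ≥ 0 for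 all t (being a sum of a mutual information term and a nonnegative expected relative entropy term), and hence converges as t → ∞. -/
open Finset

lemma kl_aux {ι : Type*} [Fintype ι] (f g : ι → ℝ)
    (hf : ∀ i, 0 ≤ f i) (hg : ∀ i, 0 ≤ g i)
    (hfg : ∀ i, f i ≠ 0 → g i ≠ 0)
    (hsum : ∑ i, g i ≤ ∑ i, f i) :
    0 ≤ ∑ i, f i * Real.log (f i / g i) := by
  have h1 : ∀ i : ι, f i - g i ≤ f i * Real.log (f i / g i) := by
    intro i
    rcases eq_or_lt_of_le (hf i) with h | h
    · simp [← h, hg i]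
    · have hgi : 0 < g i := lt_of_le_of_ne (hg i) (Ne.symm (hfg i h.ne'))
      have hlog : Real.log (g i / f i) ≤ g i / f i - 1 :=
        Real.log_le_sub_one_of_pos (div_pos hgi h)
      have hrw : Real.log (f i / g i) = -Real.log (g i / f i) := by
        rw [Real.log_div h.ne' hgi.ne', Real.log_div hgi.ne' h.ne']; ring
      rw [hrw]
      have h2 : g i / f i * f i = g i := div_mul_cancel₀ _ h.ne'
      nlinarith [hlog, h]
  calc (0:ℝ) ≤ ∑ i, (f i - g i) := by rw [Finset.sum_sub_distrib]; linarith
    _ ≤ _ := Finset.sum_le_sum fun i _ => h1 i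

lemma gibbs_aux_s16 {ι : Type*} [Fintype ι] (f g : ι → ℝ)
    (hf : ∀ i, 0 ≤ f i) (hfsum : ∑ i, f i = 1) (hg : ∀ i, 0 < g i) :
    -Real.log (∑ i, g i) ≤ ∑ i, f i * Real.log (f i / g i) := by
  have hne : Nonempty ι := by
    by_contra h
    rw [not_nonempty_iff] at h
    simp [Finset.univ_eq_empty] at hfsum
  have hS : 0 < ∑ i, g i := Finset.sum_pos (fun i _ => hg i) Finset.univ_nonempty
  set S := ∑ i, g i with hSdef
  have key : ∀ i, f i * Real.log (f i / g i)
      = f i * Real.log (f i / (g i / S)) - f i * Real.log S := by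
    intro i
    rcases eq_or_lt_of_le (hf i) with h | h
    · simp [← h]
    · rw [Real.log_div h.ne' (hg i).ne',
        Real.log_div h.ne' (div_pos (hg i) hS).ne',
        Real.log_div (hg i).ne' hS.ne']
      ring
  have hkl : 0 ≤ ∑ i, f i * Real.log (f i / (g i / S)) := by
    apply kl_aux _ _ hf (fun i => (div_pos (hg i) hS).le)
      (fun i _ => (div_pos (hg i) hS).ne')
    rw [← Finset.sum_div, ← hSdef, div_self hS.ne', hfsum]
  calc -Real.log S = 0 - (∑ i, f i) * Real.log S := by rw [hfsum]; ring
    _ ≤ (∑ i, f i * Real.log (f i / (g i / S))) - (∑ i, f i) * Real.log S := by linarith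
    _ = _ := by rw [Finset.sum_mul, ← Finset.sum_sub_distrib]; exact Finset.sum_congr rfl fun i _ => (key i).symm

noncomputable def ibF {X Y Xt : Type*} [Fintype X] [Fintype Y] [Fintype Xt]
    (p : X → Y → ℝ) (pX : X → ℝ) (β : ℝ)
    (w : X → Xt → ℝ) (q : Xt → ℝ) (r : Y → Xt → ℝ) : ℝ :=
  (∑ x, ∑ t, pX x * w x t * Real.log (w x t / q t))
    + β * ∑ x, ∑ t, pX x * w x t
        * (∑ y, (p x y / pX x) * Real.log ((p x y / pX x) / r y t))

/-- Theorem 4, monotone convergence of the information bottleneck algorithm: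
starting from a strictly positive distribution `q 0` on `X̃` and a strictly positive kernel
`r 0` from `X̃` to `Y`, the alternating iterations
`w_t(x̃|x) = q_t(x̃) exp(−β D_KL(p(·|x) ‖ r_t(·|x̃)))/Z_t(x,β)`,
`q_{t+1}(x̃) = Σ_x pX(x) w_t(x̃|x)`,
`r_{t+1}(y|x̃) = Σ_x p(y|x) pX(x) w_t(x̃|x) / q_{t+1}(x̃)`
produce values `F(w_t, q_t, r_t)` that are nonincreasing, nonnegative, and hence converge. -/
theorem ib_monotone_convergence
    {X Y Xt : Type*} [Fintype X] [Fintype Y] [Fintype Xt]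
    (p : X → Y → ℝ)
    (hp : ∀ x y, 0 ≤ p x y)
    (hpsum : ∑ x, ∑ y, p x y = 1)
    (pX : X → ℝ) (hpX : ∀ x, pX x = ∑ y, p x y) (hpXpos : ∀ x, 0 < pX x)
    (β : ℝ) (hβ : 0 < β)
    (q : ℕ → Xt → ℝ) (r : ℕ → Y → Xt → ℝ) (w : ℕ → X → Xt → ℝ)
    (hq0pos : ∀ t, 0 < q 0 t) (hq0sum : ∑ t, q 0 t = 1)
    (hr0pos : ∀ y t, 0 < r 0 y t) (hr0sum : ∀ t, ∑ y, r 0 y t = 1)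
    (hw : ∀ n x t, w n x t
      = q n t * Real.exp (-β * ∑ y, (p x y / pX x)
            * Real.log ((p x y / pX x) / r n y t))
        / ∑ t', q n t' * Real.exp (-β * ∑ y, (p x y / pX x)
            * Real.log ((p x y / pX x) / r n y t')))
    (hqsucc : ∀ n t, q (n + 1) t = ∑ x, pX x * w n x t)
    (hrsucc : ∀ n y t, r (n + 1) y t
      = (∑ x, (p x y / pX x) * pX x * w n x t) / q (n + 1) t) :
    Antitone (fun n => ibF p pX β (w n) (q n) (r n))
      ∧ (∀ n, 0 ≤ ibF p pX β (w n) (q n) (r n))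
      ∧ ∃ L : ℝ, Filter.Tendsto (fun n => ibF p pX β (w n) (q n) (r n))
          Filter.atTop (nhds L) := by
  classical
  -- abbreviations
  set D : ℕ → X → Xt → ℝ := fun n x t =>
    ∑ y, (p x y / pX x) * Real.log ((p x y / pX x) / r n y t) with hDdef
  set Z : ℕ → X → ℝ := fun n x => ∑ t', q n t' * Real.exp (-β * D n x t') with hZdef
  have hw' : ∀ n x t, w n x t = q n t * Real.exp (-β * D n x t) / Z n x := hw
  have hD : ∀ n x t, D n x t
      = ∑ y, (p x y / pX x) * Real.log ((p x y / pX x) / r n y t) := fun _ _ _ => rfl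
  have hXne : Nonempty X := by
    by_contra h
    rw [not_nonempty_iff] at h
    simp [Finset.univ_eq_empty] at hpsum
  have hXtne : Nonempty Xt := by
    by_contra h
    rw [not_nonempty_iff] at h
    simp [Finset.univ_eq_empty] at hq0sum
  have hpy : ∀ x, ∑ y, p x y / pX x = 1 := fun x => by
    rw [← Finset.sum_div, ← hpX x, div_self (hpXpos x).ne']
  have hpXsum : ∑ x, pX x = 1 := by simp_rw [hpX]; exact hpsum
  -- invariants
  have key : ∀ n, (∀ t, 0 < q n t) ∧ (∑ t, q n t = 1)
      ∧ (∀ y t, 0 ≤ r n y t) ∧ (∀ t, ∑ y, r n y t = 1)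
      ∧ (∀ y t, (∃ x, p x y ≠ 0) → 0 < r n y t) := by
    intro n
    induction n with
    | zero => exact ⟨hq0pos, hq0sum, fun y t => (hr0pos y t).le, hr0sum,
        fun y t _ => hr0pos y t⟩
    | succ n ih =>
      obtain ⟨hqpos, hqsum, hrnn, hrsum, hrpos⟩ := ih
      have hZpos : ∀ x, 0 < Z n x := fun x =>
        Finset.sum_pos (fun t _ => mul_pos (hqpos t) (Real.exp_pos _)) Finset.univ_nonempty
      have hwpos : ∀ x t, 0 < w n x t := fun x t => by
        rw [hw']; exact div_pos (mul_pos (hqpos t) (Real.exp_pos _)) (hZpos x)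
      have hwsum : ∀ x, ∑ t, w n x t = 1 := fun x => by
        simp_rw [hw', ← Finset.sum_div]
        exact div_self (hZpos x).ne'
      have hq1pos : ∀ t, 0 < q (n + 1) t := fun t => by
        rw [hqsucc]
        exact Finset.sum_pos (fun x _ => mul_pos (hpXpos x) (hwpos x t))
          Finset.univ_nonempty
      have hq1sum : ∑ t, q (n + 1) t = 1 := by
        simp_rw [hqsucc]
        rw [Finset.sum_comm]
        simp_rw [← Finset.mul_sum, hwsum, mul_one]
        exact hpXsum
      have hnum_nn : ∀ y t, (0:ℝ) ≤ ∑ x, (p x y / pX x) * pX x * w n x t := by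
        intro y t
        refine Finset.sum_nonneg fun x _ => ?_
        exact mul_nonneg (mul_nonneg (div_nonneg (hp x y) (hpXpos x).le)
          (hpXpos x).le) (hwpos x t).le
      refine ⟨hq1pos, hq1sum, ?_, ?_, ?_⟩
      · intro y t
        rw [hrsucc]
        exact div_nonneg (hnum_nn y t) (hq1pos t).le
      · intro t
        simp_rw [hrsucc, ← Finset.sum_div]
        rw [Finset.sum_comm]
        have : ∀ x, ∑ y, (p x y / pX x) * pX x * w n x t = pX x * w n x t := by
          intro x
          rw [← Finset.sum_mul, ← Finset.sum_mul, hpy x, one_mul]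
        simp_rw [this]
        rw [← hqsucc, div_self (hq1pos t).ne']
      · rintro y t ⟨x0, hx0⟩
        rw [hrsucc]
        refine div_pos (Finset.sum_pos' (fun x _ => ?_) ⟨x0, Finset.mem_univ _, ?_⟩)
          (hq1pos t)
        · exact mul_nonneg (mul_nonneg (div_nonneg (hp x y) (hpXpos x).le)
            (hpXpos x).le) (hwpos x t).le
        · exact mul_pos (mul_pos (div_pos (lt_of_le_of_ne (hp x0 y) (Ne.symm hx0))
            (hpXpos x0)) (hpXpos x0)) (hwpos x0 t)
  -- derived per-n facts
  have hZpos : ∀ n x, 0 < Z n x := fun n x =>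
    Finset.sum_pos (fun t _ => mul_pos ((key n).1 t) (Real.exp_pos _)) Finset.univ_nonempty
  have hwpos : ∀ n x t, 0 < w n x t := fun n x t => by
    rw [hw']; exact div_pos (mul_pos ((key n).1 t) (Real.exp_pos _)) (hZpos n x)
  have hwsum : ∀ n x, ∑ t, w n x t = 1 := fun n x => by
    simp_rw [hw', ← Finset.sum_div]
    exact div_self (hZpos n x).ne'
  -- F at the fixed points equals -∑ pX log Z
  have FnA : ∀ n, ibF p pX β (w n) (q n) (r n) = -∑ x, pX x * Real.log (Z n x) := by
    intro n
    rw [ibF]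
    simp_rw [← hD]
    rw [Finset.mul_sum, ← Finset.sum_add_distrib, ← Finset.sum_neg_distrib]
    refine Finset.sum_congr rfl fun x _ => ?_
    have hlog : ∀ t, Real.log (w n x t / q n t) = -β * D n x t - Real.log (Z n x) := by
      intro t
      have h1 : w n x t / q n t = Real.exp (-β * D n x t) / Z n x := by
        rw [hw', div_right_comm, mul_comm (q n t), mul_div_assoc,
          div_self ((key n).1 t).ne', mul_one]
      rw [h1, Real.log_div (Real.exp_ne_zero _) (hZpos n x).ne', Real.log_exp]
    simp_rw [hlog]
    have : ∀ t, pX x * w n x t * (-β * D n x t - Real.log (Z n x))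
        + β * (pX x * w n x t * D n x t)
        = w n x t * (-(pX x * Real.log (Z n x))) := fun t => by ring
    rw [Finset.mul_sum, ← Finset.sum_add_distrib, Finset.sum_congr rfl fun t _ => this t,
      ← Finset.sum_mul, hwsum n x, one_mul]
  -- step C1
  have hC1 : ∀ n, ibF p pX β (w n) (q (n+1)) (r n) ≤ ibF p pX β (w n) (q n) (r n) := by
    intro n
    rw [ibF, ibF]
    have hterm : ∀ x t, pX x * w n x t * Real.log (w n x t / q n t)
        = pX x * w n x t * Real.log (w n x t / q (n+1) t)
          + pX x * w n x t * Real.log (q (n+1) t / q n t) := by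
      intro x t
      rw [Real.log_div (hwpos n x t).ne' ((key n).1 t).ne',
        Real.log_div (hwpos n x t).ne' ((key (n+1)).1 t).ne',
        Real.log_div ((key (n+1)).1 t).ne' ((key n).1 t).ne']
      ring
    have hcorr : ∑ x, ∑ t, pX x * w n x t * Real.log (q (n+1) t / q n t)
        = ∑ t, q (n+1) t * Real.log (q (n+1) t / q n t) := by
      rw [Finset.sum_comm]
      exact Finset.sum_congr rfl fun t _ => by
        rw [← Finset.sum_mul, ← hqsucc]
    have hkl : 0 ≤ ∑ t, q (n+1) t * Real.log (q (n+1) t / q n t) := by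
      apply kl_aux _ _ (fun t => ((key (n+1)).1 t).le) (fun t => ((key n).1 t).le)
        (fun t _ => ((key n).1 t).ne')
      rw [(key n).2.1, (key (n+1)).2.1]
    have heq : ∑ x, ∑ t, pX x * w n x t * Real.log (w n x t / q n t)
        = (∑ x, ∑ t, pX x * w n x t * Real.log (w n x t / q (n+1) t))
          + ∑ t, q (n+1) t * Real.log (q (n+1) t / q n t) := by
      rw [← hcorr, ← Finset.sum_add_distrib]
      refine Finset.sum_congr rfl fun x _ => ?_
      rw [← Finset.sum_add_distrib]
      exact Finset.sum_congr rfl fun t _ => hterm x t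
    rw [heq]
    linarith
  -- step C2
  have hC2 : ∀ n, ibF p pX β (w n) (q (n+1)) (r (n+1))
      ≤ ibF p pX β (w n) (q (n+1)) (r n) := by
    intro n
    rw [ibF, ibF]
    have hDsplit : ∀ x t,
        (∑ y, (p x y / pX x) * Real.log ((p x y / pX x) / r n y t))
        = (∑ y, (p x y / pX x) * Real.log ((p x y / pX x) / r (n+1) y t))
          + ∑ y, (p x y / pX x) * Real.log (r (n+1) y t / r n y t) := by
      intro x t
      rw [← Finset.sum_add_distrib]
      refine Finset.sum_congr rfl fun y _ => ?_
      rcases eq_or_ne (p x y) 0 with h | h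
      · simp [h]
      · have ha : 0 < p x y / pX x := div_pos (lt_of_le_of_ne (hp x y) (Ne.symm h)) (hpXpos x)
        have hrn : 0 < r n y t := (key n).2.2.2.2 y t ⟨x, h⟩
        have hrn1 : 0 < r (n+1) y t := (key (n+1)).2.2.2.2 y t ⟨x, h⟩
        rw [Real.log_div ha.ne' hrn.ne', Real.log_div ha.ne' hrn1.ne',
          Real.log_div hrn1.ne' hrn.ne']
        ring
    have hcorr : ∑ x, ∑ t, pX x * w n x t
          * ∑ y, (p x y / pX x) * Real.log (r (n+1) y t / r n y t)
        = ∑ t, q (n+1) t * ∑ y, r (n+1) y t * Real.log (r (n+1) y t / r n y t) := by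
      rw [Finset.sum_comm]
      refine Finset.sum_congr rfl fun t _ => ?_
      have h1 : ∀ x, pX x * w n x t
            * ∑ y, (p x y / pX x) * Real.log (r (n+1) y t / r n y t)
          = ∑ y, (p x y / pX x) * pX x * w n x t * Real.log (r (n+1) y t / r n y t) := by
        intro x
        rw [Finset.mul_sum]
        exact Finset.sum_congr rfl fun y _ => by ring
      simp_rw [h1]
      rw [Finset.sum_comm, Finset.mul_sum]
      refine Finset.sum_congr rfl fun y _ => ?_
      have h2 : ∑ x, (p x y / pX x) * pX x * w n x t = r (n+1) y t * q (n+1) t := by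
        rw [hrsucc, div_mul_cancel₀ _ ((key (n+1)).1 t).ne']
      rw [← Finset.sum_mul, h2]
      ring
    have hkl : ∀ t, 0 ≤ ∑ y, r (n+1) y t * Real.log (r (n+1) y t / r n y t) := by
      intro t
      apply kl_aux _ _ (fun y => (key (n+1)).2.2.1 y t) (fun y => (key n).2.2.1 y t)
      · intro y hy
        have hex : ∃ x, p x y ≠ 0 := by
          by_contra hc
          push_neg at hc
          apply hy
          rw [hrsucc]
          simp [hc]
        exact ((key n).2.2.2.2 y t hex).ne'
      · rw [(key n).2.2.2.1 t, (key (n+1)).2.2.2.1 t]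
    have hpos : 0 ≤ ∑ t, q (n+1) t * ∑ y, r (n+1) y t * Real.log (r (n+1) y t / r n y t) :=
      Finset.sum_nonneg fun t _ => mul_nonneg ((key (n+1)).1 t).le (hkl t)
    have heq : ∑ x, ∑ t, pX x * w n x t
          * (∑ y, (p x y / pX x) * Real.log ((p x y / pX x) / r n y t))
        = (∑ x, ∑ t, pX x * w n x t
            * (∑ y, (p x y / pX x) * Real.log ((p x y / pX x) / r (n+1) y t)))
          + ∑ t, q (n+1) t * ∑ y, r (n+1) y t * Real.log (r (n+1) y t / r n y t) := by
      rw [← hcorr, ← Finset.sum_add_distrib]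
      refine Finset.sum_congr rfl fun x _ => ?_
      rw [← Finset.sum_add_distrib]
      refine Finset.sum_congr rfl fun t _ => ?_
      rw [hDsplit x t]
      ring
    rw [heq]
    nlinarith [hpos, hβ]
  -- step C3
  have hC3 : ∀ n, ibF p pX β (w (n+1)) (q (n+1)) (r (n+1))
      ≤ ibF p pX β (w n) (q (n+1)) (r (n+1)) := by
    intro n
    rw [FnA (n+1), ibF]
    simp_rw [← hD]
    have heq : (∑ x, ∑ t, pX x * w n x t * Real.log (w n x t / q (n+1) t))
        + β * ∑ x, ∑ t, pX x * w n x t * D (n+1) x t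
        = ∑ x, pX x * ∑ t, w n x t
            * Real.log (w n x t / (q (n+1) t * Real.exp (-β * D (n+1) x t))) := by
      rw [Finset.mul_sum, ← Finset.sum_add_distrib]
      refine Finset.sum_congr rfl fun x _ => ?_
      rw [Finset.mul_sum, Finset.mul_sum, ← Finset.sum_add_distrib]
      refine Finset.sum_congr rfl fun t _ => ?_
      have hlog : Real.log (w n x t / (q (n+1) t * Real.exp (-β * D (n+1) x t)))
          = Real.log (w n x t / q (n+1) t) + β * D (n+1) x t := by
        rw [Real.log_div (hwpos n x t).ne'
            (mul_pos ((key (n+1)).1 t) (Real.exp_pos _)).ne',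
          Real.log_mul ((key (n+1)).1 t).ne' (Real.exp_ne_zero _), Real.log_exp,
          Real.log_div (hwpos n x t).ne' ((key (n+1)).1 t).ne']
        ring
      rw [hlog]
      ring
    rw [heq]
    have hx : ∀ x, pX x * (-Real.log (Z (n+1) x))
        ≤ pX x * ∑ t, w n x t
            * Real.log (w n x t / (q (n+1) t * Real.exp (-β * D (n+1) x t))) := by
      intro x
      refine mul_le_mul_of_nonneg_left ?_ (hpXpos x).le
      have := gibbs_aux_s16 (fun t => w n x t)
        (fun t => q (n+1) t * Real.exp (-β * D (n+1) x t))
        (fun t => (hwpos n x t).le) (hwsum n x)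
        (fun t => mul_pos ((key (n+1)).1 t) (Real.exp_pos _))
      exact this
    calc -∑ x, pX x * Real.log (Z (n+1) x)
        = ∑ x, pX x * (-Real.log (Z (n+1) x)) := by
          rw [← Finset.sum_neg_distrib]
          exact Finset.sum_congr rfl fun x _ => by ring
      _ ≤ _ := Finset.sum_le_sum fun x _ => hx x
  -- antitone
  have hanti : Antitone (fun n => ibF p pX β (w n) (q n) (r n)) := by
    apply antitone_nat_of_succ_le
    intro n
    calc ibF p pX β (w (n+1)) (q (n+1)) (r (n+1))
        ≤ ibF p pX β (w n) (q (n+1)) (r (n+1)) := hC3 n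
      _ ≤ ibF p pX β (w n) (q (n+1)) (r n) := hC2 n
      _ ≤ ibF p pX β (w n) (q n) (r n) := hC1 n
  -- nonnegativity
  have hnn : ∀ n, 0 ≤ ibF p pX β (w n) (q n) (r n) := by
    intro n
    rw [ibF]
    have h1 : 0 ≤ ∑ x, ∑ t, pX x * w n x t * Real.log (w n x t / q n t) := by
      refine Finset.sum_nonneg fun x _ => ?_
      have : ∑ t, pX x * w n x t * Real.log (w n x t / q n t)
          = pX x * ∑ t, w n x t * Real.log (w n x t / q n t) := by
        rw [Finset.mul_sum]
        exact Finset.sum_congr rfl fun t _ => by ring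
      rw [this]
      refine mul_nonneg (hpXpos x).le ?_
      apply kl_aux _ _ (fun t => (hwpos n x t).le) (fun t => ((key n).1 t).le)
        (fun t _ => ((key n).1 t).ne')
      rw [(key n).2.1, hwsum n x]
    have h2 : 0 ≤ ∑ x, ∑ t, pX x * w n x t
        * (∑ y, (p x y / pX x) * Real.log ((p x y / pX x) / r n y t)) := by
      refine Finset.sum_nonneg fun x _ => Finset.sum_nonneg fun t _ => ?_
      refine mul_nonneg (mul_nonneg (hpXpos x).le (hwpos n x t).le) ?_
      apply kl_aux _ _ (fun y => div_nonneg (hp x y) (hpXpos x).le)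
        (fun y => (key n).2.2.1 y t)
      · intro y hy
        have : p x y ≠ 0 := fun hc => hy (by simp [hc])
        exact ((key n).2.2.2.2 y t ⟨x, this⟩).ne'
      · rw [(key n).2.2.2.1 t, hpy x]
    nlinarith [hβ]
  refine ⟨hanti, hnn, ?_⟩
  refine ⟨⨅ n, ibF p pX β (w n) (q n) (r n), ?_⟩
  exact tendsto_atTop_ciInf hanti ⟨0, by rintro y ⟨n, rfl⟩; exact hnn n⟩
end

section
/- (Separate convexity of the information bottleneck free energy.) Let p be a joint probability distribution on X × Y with strictly positive marginal p_X and conditionals p(y|x), and β ≥ 0. Define F(w, q, r) = Σ_{x,x̃} p_X(x) w(x̃|x) log( w(x̃|x)/q(x̃) ) + β Σ_{x,x̃} p_X(x) w(x̃|x) D_KL( p(·|x) ‖ r(·|x̃) ). Then F is convex in each of its three arguments separately: for fixed q and r, F is convex in the conditional kernel w; for fixed w and r, F is convex in the strictly positive distribution q on X̃; and for fixed w and q, F is convex in the strictly positive conditional kernel r from X̃ to Y (each convex set being the corresponding set of normalized distributions/kernels). -/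
open Finset

private lemma log_comb {q₁ q₂ a b : ℝ} (h1 : 0 < q₁) (h2 : 0 < q₂) (ha : 0 ≤ a) (hb : 0 ≤ b)
    (hab : a + b = 1) : a * Real.log q₁ + b * Real.log q₂ ≤ Real.log (a * q₁ + b * q₂) := by
  have h := (strictConcaveOn_log_Ioi.concaveOn).2 (Set.mem_Ioi.mpr h1) (Set.mem_Ioi.mpr h2) ha hb hab
  simpa [smul_eq_mul] using h

private lemma mul_log_div_comb {c u q₁ q₂ a b : ℝ} (hc : 0 ≤ c) (h1 : 0 < q₁) (h2 : 0 < q₂)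
    (ha : 0 ≤ a) (hb : 0 ≤ b) (hab : a + b = 1) :
    c * Real.log (u / (a * q₁ + b * q₂))
      ≤ a * (c * Real.log (u / q₁)) + b * (c * Real.log (u / q₂)) := by
  have hQ : 0 < a * q₁ + b * q₂ := by
    rcases lt_or_ge 0 a with h | h
    · have : 0 ≤ b * q₂ := mul_nonneg hb h2.le
      nlinarith
    · have ha0 : a = 0 := le_antisymm h ha
      have hb1 : b = 1 := by linarith
      simp [ha0, hb1, h2]
  rcases eq_or_ne u 0 with rfl | hu
  · simp
  · rw [Real.log_div hu hQ.ne', Real.log_div hu h1.ne', Real.log_div hu h2.ne']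
    have key := mul_le_mul_of_nonneg_left (log_comb h1 h2 ha hb hab) hc
    have e : a * (c * (Real.log u - Real.log q₁)) + b * (c * (Real.log u - Real.log q₂))
        - c * (Real.log u - Real.log (a * q₁ + b * q₂))
        = c * Real.log (a * q₁ + b * q₂) - c * (a * Real.log q₁ + b * Real.log q₂)
          + (a + b - 1) * (c * Real.log u) := by ring
    rw [hab] at e
    linarith [key]

private lemma mul_log_div_convex {u v q a b : ℝ} (hu : 0 ≤ u) (hv : 0 ≤ v) (hq : 0 < q)
    (ha : 0 ≤ a) (hb : 0 ≤ b) (hab : a + b = 1) :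
    (a * u + b * v) * Real.log ((a * u + b * v) / q)
      ≤ a * (u * Real.log (u / q)) + b * (v * Real.log (v / q)) := by
  have key : ∀ t : ℝ, 0 ≤ t → t * Real.log (t / q) = t * Real.log t - t * Real.log q := by
    intro t ht
    rcases eq_or_lt_of_le ht with rfl | ht'
    · simp
    · rw [Real.log_div ht'.ne' hq.ne']; ring
  have hcomb : 0 ≤ a * u + b * v := by positivity
  rw [key _ hu, key _ hv, key _ hcomb]
  have hconv := Real.convexOn_mul_log.2 (Set.mem_Ici.mpr hu) (Set.mem_Ici.mpr hv) ha hb hab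
  simp only [smul_eq_mul] at hconv
  nlinarith [hconv]

private lemma comb1 {A A1 A2 B B1 B2 β a b : ℝ} (hA : A ≤ a * A1 + b * A2)
    (hB : B = a * B1 + b * B2) : A + β * B ≤ a * (A1 + β * B1) + b * (A2 + β * B2) := by
  have e : a * (A1 + β * B1) + b * (A2 + β * B2)
      - (a * A1 + b * A2 + β * (a * B1 + b * B2)) = 0 := by ring
  rw [hB]; linarith

private lemma comb2 {A A1 A2 B β a b : ℝ} (hab : a + b = 1) (hA : A ≤ a * A1 + b * A2) :
    A + β * B ≤ a * (A1 + β * B) + b * (A2 + β * B) := by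
  have e : a * (A1 + β * B) + b * (A2 + β * B) = a * A1 + b * A2 + (a + b) * (β * B) := by ring
  rw [hab, one_mul] at e
  linarith

private lemma comb3 {A B B1 B2 β a b : ℝ} (hab : a + b = 1) (hβ : 0 ≤ β)
    (hB : B ≤ a * B1 + b * B2) : A + β * B ≤ a * (A + β * B1) + b * (A + β * B2) := by
  have h := mul_le_mul_of_nonneg_left hB hβ
  have e : a * (A + β * B1) + b * (A + β * B2) = (a + b) * A + β * (a * B1 + b * B2) := by ring
  rw [hab, one_mul] at e
  linarith

private lemma sum_comb {ι : Type*} [Fintype ι] (f g : ι → ℝ) (a b : ℝ) :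
    a * ∑ i, f i + b * ∑ i, g i = ∑ i, (a * f i + b * g i) := by
  rw [Finset.mul_sum, Finset.mul_sum, ← Finset.sum_add_distrib]

/-- Separate convexity of the information bottleneck free energy: for `β ≥ 0`,
`F(w,q,r)` is convex in each of its three arguments separately: in the conditional kernel `w`
(for fixed strictly positive `q` and strictly positive kernel `r`), in the strictly positive
distribution `q` (for fixed `w`, `r`), and in the strictly positive kernel `r` (for fixed
`w`, `q`). -/
theorem ibF_separately_convex
    {X Y Xt : Type*} [Fintype X] [Fintype Y] [Fintype Xt]
    (p : X → Y → ℝ)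
    (hp : ∀ x y, 0 ≤ p x y)
    (hpsum : ∑ x, ∑ y, p x y = 1)
    (pX : X → ℝ) (hpX : ∀ x, pX x = ∑ y, p x y) (hpXpos : ∀ x, 0 < pX x)
    (β : ℝ) (hβ : 0 ≤ β) :
    (∀ (q : Xt → ℝ) (r : Y → Xt → ℝ) (w₁ w₂ : X → Xt → ℝ) (a b : ℝ),
        (∀ t, 0 < q t) → (∑ t, q t = 1) →
        (∀ y t, 0 < r y t) → (∀ t, ∑ y, r y t = 1) →
        (∀ x t, 0 ≤ w₁ x t) → (∀ x, ∑ t, w₁ x t = 1) →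
        (∀ x t, 0 ≤ w₂ x t) → (∀ x, ∑ t, w₂ x t = 1) →
        0 ≤ a → 0 ≤ b → a + b = 1 →
        ibF p pX β (fun x t => a * w₁ x t + b * w₂ x t) q r
          ≤ a * ibF p pX β w₁ q r + b * ibF p pX β w₂ q r)
    ∧ (∀ (w : X → Xt → ℝ) (r : Y → Xt → ℝ) (q₁ q₂ : Xt → ℝ) (a b : ℝ),
        (∀ x t, 0 ≤ w x t) → (∀ x, ∑ t, w x t = 1) →
        (∀ y t, 0 < r y t) → (∀ t, ∑ y, r y t = 1) →
        (∀ t, 0 < q₁ t) → (∑ t, q₁ t = 1) →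
        (∀ t, 0 < q₂ t) → (∑ t, q₂ t = 1) →
        0 ≤ a → 0 ≤ b → a + b = 1 →
        ibF p pX β w (fun t => a * q₁ t + b * q₂ t) r
          ≤ a * ibF p pX β w q₁ r + b * ibF p pX β w q₂ r)
    ∧ (∀ (w : X → Xt → ℝ) (q : Xt → ℝ) (r₁ r₂ : Y → Xt → ℝ) (a b : ℝ),
        (∀ x t, 0 ≤ w x t) → (∀ x, ∑ t, w x t = 1) →
        (∀ t, 0 < q t) → (∑ t, q t = 1) →
        (∀ y t, 0 < r₁ y t) → (∀ t, ∑ y, r₁ y t = 1) →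
        (∀ y t, 0 < r₂ y t) → (∀ t, ∑ y, r₂ y t = 1) →
        0 ≤ a → 0 ≤ b → a + b = 1 →
        ibF p pX β w q (fun y t => a * r₁ y t + b * r₂ y t)
          ≤ a * ibF p pX β w q r₁ + b * ibF p pX β w q r₂) := by
  
  refine ⟨?_, ?_, ?_⟩
  · intro q r w₁ w₂ a b hq hqs hr hrs hw1 hw1s hw2 hw2s ha hb hab
    simp only [ibF]
    refine comb1 ?_ ?_
    · rw [sum_comb]
      refine Finset.sum_le_sum fun x _ => ?_
      rw [sum_comb]
      refine Finset.sum_le_sum fun t _ => ?_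
      have h := mul_log_div_convex (hw1 x t) (hw2 x t) (hq t) ha hb hab
      have h2 := mul_le_mul_of_nonneg_left h (hpXpos x).le
      nlinarith [h2]
    · rw [sum_comb]
      refine Finset.sum_congr rfl fun x _ => ?_
      rw [sum_comb]
      exact Finset.sum_congr rfl fun t _ => by ring
  · intro w r q₁ q₂ a b hw hws hr hrs hq1 hq1s hq2 hq2s ha hb hab
    simp only [ibF]
    refine comb2 hab ?_
    rw [sum_comb]
    refine Finset.sum_le_sum fun x _ => ?_
    rw [sum_comb]
    refine Finset.sum_le_sum fun t _ => ?_
    have h := mul_log_div_comb (c := pX x * w x t) (u := w x t)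
      (mul_nonneg (hpXpos x).le (hw x t)) (hq1 t) (hq2 t) ha hb hab
    linarith [h]
  · intro w q r₁ r₂ a b hw hws hq hqs hr1 hr1s hr2 hr2s ha hb hab
    simp only [ibF]
    refine comb3 hab hβ ?_
    rw [sum_comb]
    refine Finset.sum_le_sum fun x _ => ?_
    rw [sum_comb]
    refine Finset.sum_le_sum fun t _ => ?_
    have hc : 0 ≤ pX x * w x t := mul_nonneg (hpXpos x).le (hw x t)
    have hin : (∑ y, (p x y / pX x) * Real.log ((p x y / pX x) / (a * r₁ y t + b * r₂ y t)))
        ≤ a * (∑ y, (p x y / pX x) * Real.log ((p x y / pX x) / r₁ y t))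
          + b * (∑ y, (p x y / pX x) * Real.log ((p x y / pX x) / r₂ y t)) := by
      rw [sum_comb]
      refine Finset.sum_le_sum fun y _ => ?_
      exact mul_log_div_comb (div_nonneg (hp x y) (hpXpos x).le) (hr1 y t) (hr2 y t) ha hb hab
    have h2 := mul_le_mul_of_nonneg_left hin hc
    nlinarith [h2]
end
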